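/- arXiv:2507.04516 — 2 statements merged into one kernel-verified Lean document; each statement's English description precedes it below -/
import Mathlib

section
/- Let G = (V, E) be a simple graph such that Δ(G) ≤ 8 and let π be a partial 8-edge-coloring of G. If e ∈ E is an uncolored butterfly-like edge such that all edges at distance at most 1 from e are colored, then e is of at least one of the types 0, 1_{ab}, 2_{ab}, 3_{ab}, 4_{ab}, 5_{ab}, 6_{abcd} for some pairwise distinct colors a, b, c, d ∈ {1,…,8}. -/
open SimpleGraph

open scoped Classical in
/-- `π` is a proper partial `D`-edge-coloring of `G`: it assigns `none` outside the edge set,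
and distinct incident edges receive different colors. -/
def IsProperPEC {V : Type} (G : SimpleGraph V) (D : ℕ) (π : Sym2 V → Option (Fin D)) : Prop :=
  (∀ e, π e ≠ none → e ∈ G.edgeSet) ∧
    ∀ e₁ e₂ : Sym2 V, e₁ ≠ e₂ → (∃ v, v ∈ e₁ ∧ v ∈ e₂) → π e₁ ≠ none → π e₁ ≠ π e₂

/-- Number of neighbors of `x` having degree `8`. -/
def deg8Nbrs {V : Type} [Fintype V] [DecidableEq V] (G : SimpleGraph V) [DecidableRel G.Adj]
    (x : V) : ℕ :=
  ((G.neighborFinset x).filter (fun w => G.degree w = 8)).card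

/-- The edge `xy` is `x`-weak. -/
def IsXWeak {V : Type} [Fintype V] [DecidableEq V] (G : SimpleGraph V) [DecidableRel G.Adj]
    (x y : V) : Prop :=
  deg8Nbrs G x ≤ 8 - G.degree y + (if G.degree y = 8 then 1 else 0)

/-- The edge `e` is weak: `e = xy` with `xy` `x`-weak or `y`-weak. -/
def IsWeakEdge {V : Type} [Fintype V] [DecidableEq V] (G : SimpleGraph V) [DecidableRel G.Adj]
    (e : Sym2 V) : Prop :=
  ∃ x y : V, e = s(x, y) ∧ G.Adj x y ∧ (IsXWeak G x y ∨ IsXWeak G y x)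

/-- A butterfly of the first kind with the given vertices. -/
def IsButterflyB1 {V : Type} [Fintype V] [DecidableEq V] (G : SimpleGraph V) [DecidableRel G.Adj]
    (x y z v₁ v₂ v₃ : V) : Prop :=
  List.Pairwise (· ≠ ·) [x, y, z, v₁, v₂, v₃] ∧
  G.Adj x y ∧ G.Adj x z ∧ G.Adj y v₁ ∧ G.Adj y v₃ ∧ G.Adj z v₁ ∧ G.Adj z v₂ ∧
  G.Adj x v₁ ∧ G.Adj x v₂ ∧ G.Adj x v₃ ∧
  G.degree y = 3 ∧ G.degree z = 3 ∧ G.degree x = 8 ∧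
  G.degree v₁ = 8 ∧ G.degree v₂ = 8 ∧ G.degree v₃ = 8

/-- A butterfly of the second kind with the given vertices. -/
def IsButterflyB2 {V : Type} [Fintype V] [DecidableEq V] (G : SimpleGraph V) [DecidableRel G.Adj]
    (x y z v₁ v₂ v₃ v₄ : V) : Prop :=
  List.Pairwise (· ≠ ·) [x, y, z, v₁, v₂, v₃, v₄] ∧
  G.Adj x y ∧ G.Adj x z ∧ G.Adj y v₁ ∧ G.Adj y v₄ ∧ G.Adj z v₂ ∧ G.Adj z v₃ ∧
  G.Adj x v₁ ∧ G.Adj x v₂ ∧ G.Adj x v₃ ∧ G.Adj x v₄ ∧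
  G.degree y = 3 ∧ G.degree z = 3 ∧ G.degree x = 8 ∧
  G.degree v₁ = 8 ∧ G.degree v₂ = 8 ∧ G.degree v₃ = 8 ∧ G.degree v₄ = 8

/-- The pair `(x, y)` is the distinguished edge `xy` of some butterfly of `G`. -/
def IsButterflyLikeAt {V : Type} [Fintype V] [DecidableEq V] (G : SimpleGraph V)
    [DecidableRel G.Adj] (x y : V) : Prop :=
  (∃ z v₁ v₂ v₃, IsButterflyB1 G x y z v₁ v₂ v₃) ∨
  (∃ z v₁ v₂ v₃ v₄, IsButterflyB2 G x y z v₁ v₂ v₃ v₄)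

/-- The edge `e` is butterfly-like. -/
def IsButterflyLike {V : Type} [Fintype V] [DecidableEq V] (G : SimpleGraph V)
    [DecidableRel G.Adj] (e : Sym2 V) : Prop :=
  ∃ x y : V, e = s(x, y) ∧ IsButterflyLikeAt G x y

/-- An edge is reducible when it is weak or butterfly-like. -/
def IsReducible {V : Type} [Fintype V] [DecidableEq V] (G : SimpleGraph V) [DecidableRel G.Adj]
    (e : Sym2 V) : Prop :=
  IsWeakEdge G e ∨ IsButterflyLike G e

/-- Reversal of darts, as a permutation. -/
def dartRev {V : Type} (G : SimpleGraph V) : Equiv.Perm G.Dart :=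
  ⟨SimpleGraph.Dart.symm, SimpleGraph.Dart.symm,
    fun d => SimpleGraph.Dart.symm_symm d, fun d => SimpleGraph.Dart.symm_symm d⟩

/-- `ρ` is a rotation system of `G`: it permutes the darts around each vertex
in a single cycle. -/
def IsRotationSystem {V : Type} (G : SimpleGraph V) (ρ : Equiv.Perm G.Dart) : Prop :=
  (∀ d : G.Dart, (ρ d).fst = d.fst) ∧
    ∀ d d' : G.Dart, d.fst = d'.fst → ρ.SameCycle d d'

/-- The face permutation of a rotation system. -/
def facePerm {V : Type} (G : SimpleGraph V) (ρ : Equiv.Perm G.Dart) : Equiv.Perm G.Dart :=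
  (dartRev G).trans ρ

/-- The setoid of darts whose classes are the faces of a combinatorial embedding. -/
def faceSetoid {V : Type} (G : SimpleGraph V) (ρ : Equiv.Perm G.Dart) : Setoid G.Dart :=
  ⟨(facePerm G ρ).SameCycle, Equiv.Perm.SameCycle.equivalence _⟩

/-- The number of faces of a combinatorial embedding. -/
noncomputable def numFaces {V : Type} (G : SimpleGraph V) (ρ : Equiv.Perm G.Dart) : ℕ :=
  Nat.card (Quotient (faceSetoid G ρ))

/-- The number of isolated vertices of `G`. -/
noncomputable def numIsolated {V : Type} (G : SimpleGraph V) : ℕ :=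
  Nat.card {v : V // ∀ w, ¬ G.Adj v w}

/-- The number of connected components of `G`. -/
noncomputable def numComponents {V : Type} (G : SimpleGraph V) : ℕ :=
  Nat.card G.ConnectedComponent

/-- `G` is embeddable in an orientable surface of genus at most `g`: it has a combinatorial
embedding (rotation system) whose Euler characteristic, summed over components, is at least
`2 * (number of components) - 2 * g`. -/
def GenusLE {V : Type} (G : SimpleGraph V) (g : ℕ) : Prop :=
  ∃ ρ : Equiv.Perm G.Dart, IsRotationSystem G ρ ∧
    2 * (numComponents G : ℤ) - 2 * (g : ℤ) ≤
      (Nat.card V : ℤ) - (Nat.card G.edgeSet : ℤ) + ((numFaces G ρ + numIsolated G : ℕ) : ℤ)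

/-- `G` is planar: it is embeddable in an orientable surface of genus `0`, i.e. the sphere. -/
def IsPlanar {V : Type} (G : SimpleGraph V) : Prop := GenusLE G 0

/-- Color `c` is free at `v` (no colored edge incident to `v` has color `c`). -/
def freeAt {V : Type} {D : ℕ} (π : Sym2 V → Option (Fin D)) (v : V) (c : Fin D) : Prop :=
  ∀ e : Sym2 V, v ∈ e → π e ≠ some c

/-- The graph formed by the edges colored `a` or `b`; its components are the `(a,b)`-chains. -/
def chainGraph {V : Type} {D : ℕ} (π : Sym2 V → Option (Fin D)) (a b : Fin D) : SimpleGraph V :=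
  SimpleGraph.fromEdgeSet {e | π e = some a ∨ π e = some b}

/-- `u` and `v` lie on the same `(a,b)`-chain. -/
def chainReach {V : Type} {D : ℕ} (π : Sym2 V → Option (Fin D)) (a b : Fin D) (u v : V) : Prop :=
  (chainGraph π a b).Reachable u v

/-- `v` is an endpoint of its `(a,b)`-chain (it has at most one neighbor on the chain). -/
def chainEndpoint {V : Type} {D : ℕ} (π : Sym2 V → Option (Fin D)) (a b : Fin D) (v : V) : Prop :=
  ((chainGraph π a b).neighborSet v).Subsingleton

/-- There is an `(a,b)`-chain with endpoints `u` and `v`. -/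
def chainPathEndpoints {V : Type} {D : ℕ} (π : Sym2 V → Option (Fin D)) (a b : Fin D)
    (u v : V) : Prop :=
  u ≠ v ∧ chainReach π a b u v ∧ chainEndpoint π a b u ∧ chainEndpoint π a b v

/-- The `(a,b)`-chain containing `x` is a cycle (no vertex of it is an endpoint). -/
def inChainCycle {V : Type} {D : ℕ} (π : Sym2 V → Option (Fin D)) (a b : Fin D) (x : V) : Prop :=
  ∀ v, chainReach π a b x v → ¬ chainEndpoint π a b v

/-- The vertex `w` is at distance at most `k` from the edge `e`. -/
def vtxEdgeDistLE {V : Type} (G : SimpleGraph V) (k : ℕ) (w : V) (e : Sym2 V) : Prop :=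
  ∃ u, u ∈ e ∧ ∃ p : G.Walk w u, p.length ≤ k

/-- The edges `e₁` and `e₂` are at distance at most `k` from each other. -/
def edgeDistLE {V : Type} (G : SimpleGraph V) (k : ℕ) (e₁ e₂ : Sym2 V) : Prop :=
  ∃ u, u ∈ e₁ ∧ vtxEdgeDistLE G k u e₂

/-- The uncolored edge `xy` has type 0: `π` can be turned into a coloring additionally coloring
`xy` by recoloring only edges at distance at most 1 from `xy`. -/
def HasType0 {V : Type} (G : SimpleGraph V) (π : Sym2 V → Option (Fin 8)) (x y : V) : Prop :=
  ∃ σ : Sym2 V → Option (Fin 8), IsProperPEC G 8 σ ∧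
    (∀ e, σ e ≠ none ↔ (π e ≠ none ∨ e = s(x, y))) ∧
    (∀ e, ¬ edgeDistLE G 1 e s(x, y) → σ e = π e)

/-- The uncolored edge `xy` has type `1_{ab}`. -/
def HasType1 {V : Type} (π : Sym2 V → Option (Fin 8)) (x y : V) (a b : Fin 8) : Prop :=
  freeAt π x a ∧ freeAt π y b ∧ ¬ (chainReach π a b x y ∧ chainEndpoint π a b x)

/-- The uncolored edge `xy` has type `2_{ab}`. -/
def HasType2 {V : Type} (G : SimpleGraph V) (π : Sym2 V → Option (Fin 8)) (x y : V)
    (a b : Fin 8) : Prop :=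
  freeAt π y a ∧ freeAt π y b ∧
  ∃ c : Fin 8, c ≠ b ∧ freeAt π x c ∧
    ∃ z : V, G.Adj x z ∧ G.Adj y z ∧ π s(y, z) = some c ∧ π s(x, z) = some a ∧
      ¬ inChainCycle π a b x

/-- The uncolored edge `xy` has type `3_{ab}`. -/
def HasType3 {V : Type} (G : SimpleGraph V) (π : Sym2 V → Option (Fin 8)) (x y : V)
    (a b : Fin 8) : Prop :=
  freeAt π x a ∧ freeAt π y b ∧ chainPathEndpoints π a b x y ∧
  ∃ c : Fin 8, c ≠ b ∧ freeAt π y c ∧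
    ∃ z : V, G.Adj x z ∧ freeAt π z b ∧ π s(x, z) = some c

/-- The uncolored edge `xy` has type `4_{ab}`. -/
def HasType4 {V : Type} (G : SimpleGraph V) (π : Sym2 V → Option (Fin 8)) (x y : V)
    (a b : Fin 8) : Prop :=
  freeAt π y a ∧ freeAt π y b ∧ inChainCycle π a b x ∧
  ∃ c : Fin 8, freeAt π x c ∧
    ∃ z v : V, z ≠ v ∧ z ≠ x ∧ z ≠ y ∧ v ≠ x ∧ v ≠ y ∧
      G.Adj x v ∧ G.Adj z v ∧ π s(x, v) = some a ∧ π s(z, v) = some c ∧ freeAt π z b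

/-- The uncolored edge `xy` has type `5_{ab}`. -/
def HasType5 {V : Type} (G : SimpleGraph V) (π : Sym2 V → Option (Fin 8)) (x y : V)
    (a b : Fin 8) : Prop :=
  freeAt π y a ∧ freeAt π x b ∧ chainPathEndpoints π a b x y ∧
  ∃ c : Fin 8, c ≠ a ∧ freeAt π y c ∧
    ∃ z v : V, z ≠ v ∧ z ≠ x ∧ z ≠ y ∧ v ≠ x ∧ v ≠ y ∧
      G.Adj x v ∧ G.Adj z v ∧ π s(x, v) = some c ∧ π s(z, v) = some a ∧
      freeAt π z b ∧ freeAt π z c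

/-- The uncolored edge `xy` has type `6_{abcd}`. -/
def HasType6 {V : Type} (G : SimpleGraph V) (π : Sym2 V → Option (Fin 8)) (x y : V)
    (a b c d : Fin 8) : Prop :=
  freeAt π y a ∧ freeAt π y c ∧ freeAt π y d ∧ freeAt π x b ∧
  chainPathEndpoints π a b x y ∧ inChainCycle π c d x ∧
  ∃ z v₁ v₂ : V, z ≠ v₁ ∧ z ≠ v₂ ∧ v₁ ≠ v₂ ∧ z ≠ x ∧ z ≠ y ∧ v₁ ≠ x ∧ v₁ ≠ y ∧ v₂ ≠ x ∧ v₂ ≠ y ∧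
    G.Adj x v₁ ∧ G.Adj x v₂ ∧ G.Adj z v₁ ∧ G.Adj z v₂ ∧
    π s(x, v₁) = some c ∧ π s(x, v₂) = some a ∧ π s(z, v₁) = some a ∧ π s(z, v₂) = some c ∧
    freeAt π z b ∧ freeAt π z d

/-!
Since `x` has degree at most 8 and `xy` is uncolored, some color `a` is missing at `x`; the
degree-3 vertices `y` and `z` of the butterfly see only two, resp. three, colors. If `a` is also
missing at `y`, color `xy` with it. Otherwise `a` lies on an edge `yu₁`. When the other color at
`y` differs from `c₀ = π(xz)`, a color `b` missing at `y` and `z` gives type `1_{ab}` or, if the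
`(a,b)`-chain from `x` ends at `y`, type `3_{ab}` through `z`. When `y` sees exactly `a` and `c₀`:
if `a` is on an edge `zw₁`, exchanging colors along `x w₁ z` (and then along `x w₂ z`) frees at
`x` a color missing at `y`, which gives type 0. Otherwise one of the paths `x wᵢ z` gives type 5,
unless `π(xw₁) = π(zw₂)` and `π(xw₂) = π(zw₁)`; then a further two-colored chain through `x`
is either a cycle (type 6) or not (type 2, through the common neighbour `u₁`).
-/

section

open Function

variable {V : Type}

namespace IsProperPEC

variable {G : SimpleGraph V} {D : ℕ} {π : Sym2 V → Option (Fin D)}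

theorem apply_ne_of_incident (hπ : IsProperPEC G D π) {e e' : Sym2 V} {v : V} {c : Fin D}
    (he : π e = some c) (hv : v ∈ e) (hv' : v ∈ e') (hne : e' ≠ e) : π e' ≠ some c := by
  intro he'
  exact hπ.2 e' e hne ⟨v, hv', hv⟩ (by simp [he']) (he'.trans he.symm)

theorem color_ne (hπ : IsProperPEC G D π) {e e' : Sym2 V} {v : V} {c c' : Fin D}
    (he : π e = some c) (he' : π e' = some c') (hv : v ∈ e) (hv' : v ∈ e') (hne : e' ≠ e) :
    c' ≠ c := by
  rintro rfl
  exact hπ.apply_ne_of_incident he hv hv' hne he'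

theorem color_ne_left (hπ : IsProperPEC G D π) {v w w' : V} {c c' : Fin D} (hw : w' ≠ w)
    (h : π s(v, w) = some c) (h' : π s(v, w') = some c') : c' ≠ c :=
  hπ.color_ne h h' (Sym2.mem_mk_left v w) (Sym2.mem_mk_left v w') fun he =>
    hw (Sym2.congr_right.mp he)

variable [DecidableEq V]

theorem uncolor (hπ : IsProperPEC G D π) (e : Sym2 V) : IsProperPEC G D (update π e none) := by
  refine ⟨fun e' h => ?_, fun e₁ e₂ hne hv h => ?_⟩
  · rcases eq_or_ne e' e with rfl | he
    · simp at h
    · exact hπ.1 e' (by rwa [update_of_ne he] at h)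
  · rcases eq_or_ne e₁ e with rfl | h₁
    · simp at h
    rw [update_of_ne h₁] at h ⊢
    rcases eq_or_ne e₂ e with rfl | h₂
    · simpa using h
    · rw [update_of_ne h₂]
      exact hπ.2 e₁ e₂ hne hv h

theorem recolor (hπ : IsProperPEC G D π) {u v : V} {c : Fin D} (huv : G.Adj u v)
    (hu : freeAt (update π s(u, v) none) u c) (hv : freeAt (update π s(u, v) none) v c) :
    IsProperPEC G D (update π s(u, v) (some c)) := by
  have hfree : ∀ e, e ≠ s(u, v) → ∀ t ∈ s(u, v), t ∈ e → π e ≠ some c := by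
    intro e he t ht hte
    rw [Sym2.mem_iff] at ht
    rcases ht with rfl | rfl
    · simpa [update_of_ne he] using hu e hte
    · simpa [update_of_ne he] using hv e hte
  refine ⟨fun e h => ?_, fun e₁ e₂ hne ⟨t, ht₁, ht₂⟩ h => ?_⟩
  · rcases eq_or_ne e s(u, v) with rfl | he
    · exact huv
    · exact hπ.1 e (by rwa [update_of_ne he] at h)
  · rcases eq_or_ne e₁ s(u, v) with rfl | h₁ <;> rcases eq_or_ne e₂ s(u, v) with rfl | h₂
    · exact absurd rfl hne
    · rw [update_self, update_of_ne h₂]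
      exact (hfree e₂ h₂ t ht₁ ht₂).symm
    · rw [update_self, update_of_ne h₁]
      exact hfree e₁ h₁ t ht₂ ht₁
    · rw [update_of_ne h₁] at h
      rw [update_of_ne h₁, update_of_ne h₂]
      exact hπ.2 e₁ e₂ hne ⟨t, ht₁, ht₂⟩ h

theorem freeAt_update_of_eq (hπ : IsProperPEC G D π) {e : Sym2 V} {v : V} {c : Fin D}
    {c' : Option (Fin D)} (he : π e = some c) (hv : v ∈ e) (hc : c' ≠ some c) :
    freeAt (update π e c') v c := by
  intro e' hv'
  rcases eq_or_ne e' e with rfl | hne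
  · rwa [update_self]
  · rw [update_of_ne hne]
    exact hπ.apply_ne_of_incident he hv hv' hne

end IsProperPEC

namespace freeAt

variable {D : ℕ} {π : Sym2 V → Option (Fin D)} {v : V} {c : Fin D}

theorem ne (h : freeAt π v c) {e : Sym2 V} {c' : Fin D} (hv : v ∈ e) (he : π e = some c') :
    c' ≠ c := by
  rintro rfl
  exact h e hv he

variable [DecidableEq V] {e : Sym2 V} {c' : Option (Fin D)}

theorem update_of_ne (h : freeAt π v c) (hc : c' ≠ some c) : freeAt (update π e c') v c := by
  intro e' hv'
  rcases eq_or_ne e' e with rfl | hne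
  · rwa [update_self]
  · rw [Function.update_of_ne hne]
    exact h e' hv'

theorem update_none (h : freeAt π v c) : freeAt (update π e none) v c :=
  h.update_of_ne (by simp)

theorem update_of_notMem (h : freeAt π v c) (hv : v ∉ e) : freeAt (update π e c') v c := by
  intro e' hv'
  rcases eq_or_ne e' e with rfl | hne
  · exact absurd hv' hv
  · rw [Function.update_of_ne hne]
    exact h e' hv'

end freeAt

namespace IsProperPEC

variable {G : SimpleGraph V} {D : ℕ} {π : Sym2 V → Option (Fin D)} [DecidableEq V]

theorem swapPath (hπ : IsProperPEC G D π) {u w v : V} {α β : Fin D} (huw : G.Adj u w)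
    (hwv : G.Adj w v) (huv : u ≠ v) (hβ : π s(u, w) = some β) (hαu : freeAt π u α)
    (hαw : freeAt (update π s(w, v) none) w α) (hβv : freeAt π v β) :
    IsProperPEC G D (update (update π s(u, w) (some α)) s(w, v) (some β)) := by
  have hne : s(w, v) ≠ s(u, w) := by simp [huw.ne', huv.symm]
  have hαβ : α ≠ β := (hαu.ne (Sym2.mem_mk_left u w) hβ).symm
  have hu : u ∉ s(w, v) := by simp [huw.ne, huv]
  -- uncolor both edges, then color `wv` with `β` and `uw` with `α`
  set τ := update (update π s(w, v) none) s(u, w) none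
  have hτ : IsProperPEC G D τ := (hπ.uncolor _).uncolor _
  have hβw : freeAt τ w β :=
    (hπ.uncolor _).freeAt_update_of_eq (by rwa [update_of_ne hne.symm]) (Sym2.mem_mk_right u w)
      (by simp)
  have hτβ := hτ.recolor hwv hβw.update_none hβv.update_none.update_none.update_none
  have hτβα := hτβ.recolor huw (hαu.update_none.update_none.update_of_notMem hu).update_none
    ((hαw.update_none.update_of_ne (by simpa using hαβ.symm)).update_none)
  convert hτβα using 1
  funext e
  simp only [τ, update_apply]
  split_ifs <;> simp_all

end IsProperPEC

section Distance

variable {G : SimpleGraph V} {k : ℕ} {e e' : Sym2 V} {u v : V}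

theorem edgeDistLE_of_mem (hv : v ∈ e) (hv' : v ∈ e') : edgeDistLE G k e e' :=
  ⟨v, hv, v, hv', .nil, by simp⟩

theorem edgeDistLE_of_adj (hk : 1 ≤ k) (hu : u ∈ e) (hv : v ∈ e') (huv : G.Adj u v) :
    edgeDistLE G k e e' :=
  ⟨u, hu, v, hv, .cons huv .nil, by simpa using hk⟩

end Distance

def ColoredNear (G : SimpleGraph V) {D : ℕ} (π : Sym2 V → Option (Fin D)) (x y : V) : Prop :=
  ∀ e ∈ G.edgeSet, e ≠ s(x, y) → edgeDistLE G 1 e s(x, y) → π e ≠ none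

section TypeZero

variable [DecidableEq V] {G : SimpleGraph V} {π : Sym2 V → Option (Fin 8)} {x y : V}

theorem hasType0_of_recoloring {σ : Sym2 V → Option (Fin 8)} {c : Fin 8} (hxy : G.Adj x y)
    (hcol : ColoredNear G π x y) (hσ : IsProperPEC G 8 σ) (S : Set (Sym2 V))
    (hS : ∀ e ∈ S, edgeDistLE G 1 e s(x, y) ∧ y ∉ e ∧ σ e ≠ none)
    (hagree : ∀ e ∉ S, σ e = π e) (hx : freeAt σ x c) (hy : freeAt π y c) :
    HasType0 G π x y := by
  have hyσ : freeAt σ y c := fun e he => by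
    by_cases heS : e ∈ S
    · exact absurd he (hS e heS).2.1
    · rw [hagree e heS]
      exact hy e he
  refine ⟨update σ s(x, y) (some c), hσ.recolor hxy hx.update_none hyσ.update_none,
    fun e => ?_, fun e he => ?_⟩
  · rcases eq_or_ne e s(x, y) with rfl | hne
    · simp
    rw [update_of_ne hne]
    by_cases heS : e ∈ S
    · obtain ⟨hnear, -, hσe⟩ := hS e heS
      simp [hσe, hcol e (hσ.1 e hσe) hne hnear]
    · simp [hagree e heS, hne]
  · have hne : e ≠ s(x, y) := by
      rintro rfl
      exact he (edgeDistLE_of_mem (Sym2.mem_mk_left x y) (Sym2.mem_mk_left x y))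
    rw [update_of_ne hne, hagree e fun heS => he (hS e heS).1]

theorem hasType0_of_freeAt (hπ : IsProperPEC G 8 π) (hxy : G.Adj x y)
    (hcol : ColoredNear G π x y) {c : Fin 8} (hx : freeAt π x c) (hy : freeAt π y c) :
    HasType0 G π x y :=
  hasType0_of_recoloring hxy hcol hπ ∅ (by simp) (fun _ _ => rfl) hx hy

theorem hasType0_of_swap (hπ : IsProperPEC G 8 π) (hxy : G.Adj x y) (hcol : ColoredNear G π x y)
    {z w : V} {a β : Fin 8} (hxz : G.Adj x z) (hxw : G.Adj x w) (hzw : G.Adj z w) (hyz : y ≠ z)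
    (hyw : y ≠ w) (hxwβ : π s(x, w) = some β) (hzwa : π s(z, w) = some a) (hax : freeAt π x a)
    (hyβ : freeAt π y β) (hzβ : freeAt π z β) : HasType0 G π x y := by
  have hwz : π s(w, z) = some a := by rwa [Sym2.eq_swap]
  have hσ := hπ.swapPath hxw hzw.symm hxz.ne hxwβ hax
    (hπ.freeAt_update_of_eq hwz (Sym2.mem_mk_left w z) (by simp)) hzβ
  have hne : s(x, w) ≠ s(w, z) := by simp [hxw.ne, hxz.ne]
  refine hasType0_of_recoloring hxy hcol hσ {s(x, w), s(w, z)} ?_ ?_ ?_ hyβ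
  · rintro e (rfl | rfl)
    · exact ⟨edgeDistLE_of_mem (Sym2.mem_mk_left x w) (Sym2.mem_mk_left x y),
        by simp [hxy.ne', hyw], by simp [hne]⟩
    · exact ⟨edgeDistLE_of_adj le_rfl (Sym2.mem_mk_right w z) (Sym2.mem_mk_left x y) hxz.symm,
        by simp [hyw, hyz], by simp⟩
  · intro e he
    simp only [Set.mem_insert_iff, Set.mem_singleton_iff, not_or] at he
    simp [update_of_ne he.1, update_of_ne he.2]
  · exact ((hπ.freeAt_update_of_eq hxwβ (Sym2.mem_mk_left x w)
      (by simpa using (hax.ne (Sym2.mem_mk_left x w) hxwβ).symm)).update_of_notMem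
      (by simp [hxw.ne, hxz.ne]))

theorem hasType0_of_doubleSwap (hπ : IsProperPEC G 8 π) (hxy : G.Adj x y)
    (hcol : ColoredNear G π x y) {z w₁ w₂ : V} {a s β : Fin 8} (hxz : G.Adj x z)
    (hxw₁ : G.Adj x w₁) (hxw₂ : G.Adj x w₂) (hzw₁ : G.Adj z w₁) (hzw₂ : G.Adj z w₂) (hyz : y ≠ z)
    (hyw₁ : y ≠ w₁) (hyw₂ : y ≠ w₂)
    (hw : w₁ ≠ w₂) (hxw₁s : π s(x, w₁) = some s) (hzw₁a : π s(z, w₁) = some a)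
    (hzw₂s : π s(z, w₂) = some s) (hxw₂β : π s(x, w₂) = some β) (hax : freeAt π x a)
    (hyβ : freeAt π y β) (hzβ : freeAt π z β) : HasType0 G π x y := by
  -- Uncoloring `zw₂` frees `s` at `z`, so the path `x w₁ z` can be swapped; this frees `s` at `x`,
  -- so `x w₂ z` can be swapped as well, which frees `β` at `x`.
  rw [Sym2.eq_swap] at hzw₁a hzw₂s
  have := hxz.ne; have := hxw₁.ne; have := hxw₂.ne; have := hzw₁.ne; have := hzw₂.ne
  have := hxz.ne'; have := hxw₁.ne'; have := hxw₂.ne'; have := hzw₁.ne'; have := hzw₂.ne'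
  have := hw.symm
  have hsβ : some s ≠ some β := by
    simpa using hπ.color_ne hxw₂β hxw₁s (Sym2.mem_mk_left x w₂) (Sym2.mem_mk_left x w₁)
      (by simp [*])
  have has : some a ≠ some s := by
    simpa using hax.ne (Sym2.mem_mk_left x w₁) hxw₁s |>.symm
  set τ := update π s(w₂, z) none
  have hτ : IsProperPEC G 8 τ := hπ.uncolor _
  have hτ₁ : τ s(x, w₁) = some s := by simp [τ, *]
  have hτ₂ : τ s(w₁, z) = some a := by simp [τ, *]
  set τ' := update (update τ s(x, w₁) (some a)) s(w₁, z) (some s)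
  have hτ' : IsProperPEC G 8 τ' :=
    hτ.swapPath hxw₁ hzw₁.symm hxz.ne hτ₁ hax.update_none
      (hτ.freeAt_update_of_eq hτ₂ (Sym2.mem_mk_left w₁ z) (by simp))
      (hπ.freeAt_update_of_eq hzw₂s (Sym2.mem_mk_right w₂ z) (by simp))
  have hτ'β : τ' s(x, w₂) = some β := by simp [τ', τ, *]
  set σ := update (update τ' s(x, w₂) (some s)) s(w₂, z) (some β)
  have hσ : IsProperPEC G 8 σ := by
    refine hτ'.swapPath hxw₂ hzw₂.symm hxz.ne hτ'β
      ((hτ.freeAt_update_of_eq hτ₁ (Sym2.mem_mk_left x w₁) has).update_of_notMem ?_) ?_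
      ((hzβ.update_none.update_of_notMem ?_).update_of_ne hsβ)
    · simp [*]
    · refine (((hπ.freeAt_update_of_eq hzw₂s (Sym2.mem_mk_left w₂ z) (by simp)).update_of_notMem
        ?_).update_of_notMem ?_).update_none <;> simp [*]
    · simp [*]
  refine hasType0_of_recoloring hxy hcol hσ {s(x, w₁), s(w₁, z), s(x, w₂), s(w₂, z)} ?_ ?_
    ((hτ'.freeAt_update_of_eq hτ'β (Sym2.mem_mk_left x w₂) hsβ).update_of_notMem (by simp [*])) hyβ
  · have hnear : ∀ w, edgeDistLE G 1 s(w, z) s(x, y) := fun w =>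
      edgeDistLE_of_adj le_rfl (Sym2.mem_mk_right w z) (Sym2.mem_mk_left x y) hxz.symm
    rintro e (rfl | rfl | rfl | rfl)
    all_goals refine ⟨?_, by simp [hxy.ne', hyz, hyw₁, hyw₂], ?_⟩
    all_goals first
      | exact edgeDistLE_of_mem (Sym2.mem_mk_left x _) (Sym2.mem_mk_left x y)
      | exact hnear _
      | simp [σ, τ', *]
  · intro e he
    simp only [Set.mem_insert_iff, Set.mem_singleton_iff, not_or] at he
    simp [σ, τ', τ, update_of_ne, he]

end TypeZero

theorem exists_notMem_of_card_lt {n : ℕ} {s : Finset (Fin n)} (h : s.card < n) : ∃ c, c ∉ s := by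
  obtain ⟨c, -, hc⟩ := Finset.exists_mem_notMem_of_card_lt_card (s := s) (t := Finset.univ)
    (by simpa using h)
  exact ⟨c, hc⟩

section FreeColors

variable {G : SimpleGraph V} {D : ℕ} {π : Sym2 V → Option (Fin D)}

theorem freeAt_of_adj_iff (hπ : IsProperPEC G D π) {v a₁ a₂ a₃ : V}
    (hN : ∀ t, G.Adj v t ↔ t = a₁ ∨ t = a₂ ∨ t = a₃) {c : Fin D} (h₁ : π s(v, a₁) ≠ some c)
    (h₂ : π s(v, a₂) ≠ some c) (h₃ : π s(v, a₃) ≠ some c) : freeAt π v c := by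
  intro e hv hc
  obtain ⟨t, rfl⟩ := Sym2.mem_iff_exists.mp hv
  rcases (hN t).1 (hπ.1 s(v, t) (by simp [hc])) with rfl | rfl | rfl
  exacts [h₁ hc, h₂ hc, h₃ hc]

theorem exists_freeAt_of_degree_le [Fintype V] [DecidableEq V] [DecidableRel G.Adj]
    (hπ : IsProperPEC G D π) {x y : V} (hdeg : G.degree x ≤ D) (hxy : G.Adj x y)
    (huncol : π s(x, y) = none) : ∃ c, freeAt π x c := by
  set used := ((G.neighborFinset x).erase y).image fun w => π s(x, w)
  have hy : y ∈ G.neighborFinset x := by simpa using hxy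
  have hcard : used.card < (Finset.univ.image (some : Fin D → Option (Fin D))).card := by
    have := Finset.card_pos.mpr ⟨y, hy⟩
    calc used.card ≤ ((G.neighborFinset x).erase y).card := Finset.card_image_le
      _ = G.degree x - 1 := by rw [Finset.card_erase_of_mem hy, card_neighborFinset_eq_degree]
      _ < D := by rw [card_neighborFinset_eq_degree] at this; omega
      _ = _ := by simp [Finset.card_image_of_injective _ (Option.some_injective _)]
  obtain ⟨o, ho, housed⟩ := Finset.exists_mem_notMem_of_card_lt_card hcard
  obtain ⟨c, -, rfl⟩ := Finset.mem_image.mp ho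
  refine ⟨c, fun e hx hc => housed ?_⟩
  obtain ⟨w, rfl⟩ := Sym2.mem_iff_exists.mp hx
  have hwy : w ≠ y := by
    rintro rfl
    simp [huncol] at hc
  have hxw : G.Adj x w := hπ.1 s(x, w) (by simp [hc])
  exact Finset.mem_image.mpr ⟨w, Finset.mem_erase.mpr ⟨hwy, by simpa using hxw⟩, hc⟩

end FreeColors

section Chains

variable {G : SimpleGraph V} {D : ℕ} {π : Sym2 V → Option (Fin D)} {a b : Fin D}

theorem chainGraph_comm (π : Sym2 V → Option (Fin D)) (a b : Fin D) :
    chainGraph π a b = chainGraph π b a := by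
  simp only [chainGraph, or_comm]

theorem inChainCycle_comm {x : V} : inChainCycle π a b x ↔ inChainCycle π b a x := by
  simp only [inChainCycle, chainReach, chainEndpoint, chainGraph_comm π a b]

theorem chainPathEndpoints_comm {x y : V} :
    chainPathEndpoints π a b x y ↔ chainPathEndpoints π b a x y := by
  simp only [chainPathEndpoints, chainReach, chainEndpoint, chainGraph_comm π a b]

theorem chainEndpoint_of_freeAt_left (hπ : IsProperPEC G D π) {v : V} (h : freeAt π v a) :
    chainEndpoint π a b v := by
  intro w hw w' hw'
  simp only [chainGraph, mem_neighborSet, fromEdgeSet_adj] at hw hw'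
  have hb : π s(v, w) = some b := hw.1.resolve_left (h _ (Sym2.mem_mk_left v w))
  have hb' : π s(v, w') = some b := hw'.1.resolve_left (h _ (Sym2.mem_mk_left v w'))
  by_contra hne
  exact hπ.apply_ne_of_incident hb (Sym2.mem_mk_left v w) (Sym2.mem_mk_left v w')
    (fun h => hne (Sym2.congr_right.mp h).symm) hb'

theorem chainEndpoint_of_freeAt_right (hπ : IsProperPEC G D π) {v : V} (h : freeAt π v b) :
    chainEndpoint π a b v := by
  rw [chainEndpoint, chainGraph_comm]
  exact chainEndpoint_of_freeAt_left hπ h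

end Chains

def HasSomeType (G : SimpleGraph V) (π : Sym2 V → Option (Fin 8)) (x y : V) : Prop :=
  HasType0 G π x y ∨
    (∃ a b : Fin 8, a ≠ b ∧
      (HasType1 π x y a b ∨ HasType2 G π x y a b ∨ HasType3 G π x y a b ∨
        HasType4 G π x y a b ∨ HasType5 G π x y a b)) ∨
    (∃ a b c d : Fin 8, a ≠ b ∧ a ≠ c ∧ a ≠ d ∧ b ≠ c ∧ b ≠ d ∧ c ≠ d ∧
      HasType6 G π x y a b c d)

section Types

variable {G : SimpleGraph V} {π : Sym2 V → Option (Fin 8)} {x y : V} {a b c d : Fin 8}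

theorem HasType0.hasSomeType (h : HasType0 G π x y) : HasSomeType G π x y := .inl h

theorem HasType1.hasSomeType (h : HasType1 π x y a b) (hab : a ≠ b) : HasSomeType G π x y :=
  .inr <| .inl ⟨a, b, hab, .inl h⟩

theorem HasType2.hasSomeType (h : HasType2 G π x y a b) (hab : a ≠ b) : HasSomeType G π x y :=
  .inr <| .inl ⟨a, b, hab, .inr <| .inl h⟩

theorem HasType3.hasSomeType (h : HasType3 G π x y a b) (hab : a ≠ b) : HasSomeType G π x y :=
  .inr <| .inl ⟨a, b, hab, .inr <| .inr <| .inl h⟩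

theorem HasType5.hasSomeType (h : HasType5 G π x y a b) (hab : a ≠ b) : HasSomeType G π x y :=
  .inr <| .inl ⟨a, b, hab, .inr <| .inr <| .inr <| .inr h⟩

theorem HasType6.hasSomeType (h : HasType6 G π x y a b c d) (hab : a ≠ b) (hac : a ≠ c)
    (had : a ≠ d) (hbc : b ≠ c) (hbd : b ≠ d) (hcd : c ≠ d) : HasSomeType G π x y :=
  .inr <| .inr ⟨a, b, c, d, hab, hac, had, hbc, hbd, hcd, h⟩

theorem hasType1_or_chainPathEndpoints (hπ : IsProperPEC G 8 π) (hxy : x ≠ y)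
    (hax : freeAt π x a) (hyb : freeAt π y b) :
    HasType1 π x y a b ∨ chainPathEndpoints π a b x y := by
  by_cases h : chainReach π a b x y
  · exact .inr ⟨hxy, h, chainEndpoint_of_freeAt_left hπ hax, chainEndpoint_of_freeAt_right hπ hyb⟩
  · exact .inl ⟨hax, hyb, fun h' => h h'.1⟩

theorem hasType1_or_hasType3 (hπ : IsProperPEC G 8 π) {z : V} (hxy : x ≠ y) (hxz : G.Adj x z)
    (hxzc : π s(x, z) = some c) (hax : freeAt π x a) (hyb : freeAt π y b) (hyc : freeAt π y c)
    (hzb : freeAt π z b) : HasType1 π x y a b ∨ HasType3 G π x y a b :=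
  (hasType1_or_chainPathEndpoints hπ hxy hax hyb).imp_right fun h =>
    ⟨hax, hyb, h, c, hzb.ne (Sym2.mem_mk_right x z) hxzc, hyc, z, hxz, hzb, hxzc⟩

theorem hasType1_or_hasType5 (hπ : IsProperPEC G 8 π) {z w : V} {s β : Fin 8} (hxy : x ≠ y)
    (hxw : G.Adj x w) (hzw : G.Adj z w) (hzx : z ≠ x) (hzy : z ≠ y) (hwy : w ≠ y)
    (hxwβ : π s(x, w) = some β) (hzws : π s(z, w) = some s) (hax : freeAt π x a)
    (hza : freeAt π z a) (hys : freeAt π y s) (hyβ : freeAt π y β) (hzβ : freeAt π z β) :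
    HasType1 π x y a s ∨ HasType5 G π x y s a :=
  (hasType1_or_chainPathEndpoints hπ hxy hax hys).imp_right fun h =>
    ⟨hys, hax, chainPathEndpoints_comm.mp h, β,
      hπ.color_ne hzws hxwβ (Sym2.mem_mk_right z w) (Sym2.mem_mk_right x w)
        (by simp [hzx.symm, hxw.ne]),
      hyβ, z, w, hzw.ne, hzx, hzy, hxw.ne', hwy, hxw, hzw, hxwβ, hzws, hza, hzβ⟩

theorem hasType6_or_hasType2 {z u v₁ v₂ : V} {A C p q : Fin 8}
    (hxv₁ : G.Adj x v₁) (hxv₂ : G.Adj x v₂) (hzv₁ : G.Adj z v₁) (hzv₂ : G.Adj z v₂) (hv : v₁ ≠ v₂)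
    (hzx : z ≠ x) (hzy : z ≠ y) (hv₁y : v₁ ≠ y) (hv₂y : v₂ ≠ y) (hxv₁C : π s(x, v₁) = some C)
    (hxv₂A : π s(x, v₂) = some A) (hzv₁A : π s(z, v₁) = some A) (hzv₂C : π s(z, v₂) = some C)
    (hpath : chainPathEndpoints π A a x y) (hax : freeAt π x a) (hyA : freeAt π y A)
    (hyC : freeAt π y C) (hyd : freeAt π y d) (hza : freeAt π z a) (hzd : freeAt π z d)
    (hxu : G.Adj x u) (hyu : G.Adj y u) (hyua : π s(y, u) = some a) (hxup : π s(x, u) = some p)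
    (hpq : p = C ∧ q = d ∨ p = d ∧ q = C) :
    HasType6 G π x y A a C d ∨ HasType2 G π x y p q := by
  by_cases hcyc : inChainCycle π C d x
  · exact .inl ⟨hyA, hyC, hyd, hax, hpath, hcyc, z, v₁, v₂, hzv₁.ne, hzv₂.ne, hv, hzx, hzy,
      hxv₁.ne', hv₁y, hxv₂.ne', hv₂y, hxv₁, hxv₂, hzv₁, hzv₂, hxv₁C, hxv₂A, hzv₁A, hzv₂C, hza, hzd⟩
  · obtain ⟨hyp, hyq, hcyc'⟩ : freeAt π y p ∧ freeAt π y q ∧ ¬ inChainCycle π p q x := by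
      rcases hpq with ⟨rfl, rfl⟩ | ⟨rfl, rfl⟩
      exacts [⟨hyC, hyd, hcyc⟩, ⟨hyd, hyC, inChainCycle_comm.not.mp hcyc⟩]
    exact .inr ⟨hyp, hyq, a, hyq.ne (Sym2.mem_mk_left y u) hyua, hax, u, hxu, hyu, hyua, hxup,
      hcyc'⟩

end Types

section Uncolored

variable {G : SimpleGraph V} {D : ℕ} {π : Sym2 V → Option (Fin D)} {x y : V}

theorem exists_color_of_adj_left (hcol : ColoredNear G π x y) {w : V} (hxw : G.Adj x w)
    (hwy : w ≠ y) : ∃ c, π s(x, w) = some c :=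
  Option.ne_none_iff_exists'.mp <| hcol _ hxw (fun h => hwy (Sym2.congr_right.mp h))
    (edgeDistLE_of_mem (Sym2.mem_mk_left x w) (Sym2.mem_mk_left x y))

theorem exists_color_of_adj_right (hcol : ColoredNear G π x y) {u : V} (hyu : G.Adj y u)
    (hux : u ≠ x) : ∃ c, π s(y, u) = some c :=
  Option.ne_none_iff_exists'.mp <| hcol _ hyu (by simp [hux, hyu.ne'])
    (edgeDistLE_of_mem (Sym2.mem_mk_left y u) (Sym2.mem_mk_right x y))

theorem exists_color_of_adj_adj (hcol : ColoredNear G π x y) {z w : V} (hxz : G.Adj x z)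
    (hzy : z ≠ y) (hzw : G.Adj z w) : ∃ c, π s(z, w) = some c :=
  Option.ne_none_iff_exists'.mp <| hcol _ hzw (by simp [hxz.ne', hzy])
    (edgeDistLE_of_adj le_rfl (Sym2.mem_mk_left z w) (Sym2.mem_mk_left x y) hxz.symm)

end Uncolored

/-- `y` and `z` are the degree-3 vertices of a butterfly centred at `x`; in a butterfly `B1` the
vertices `u₁` and `w₁` coincide. -/
structure IsButterflyFrame (G : SimpleGraph V) (x y z u₁ u₂ w₁ w₂ : V) : Prop where
  adj_xy : G.Adj x y
  adj_xz : G.Adj x z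
  adj_xu₁ : G.Adj x u₁
  adj_xu₂ : G.Adj x u₂
  adj_xw₁ : G.Adj x w₁
  adj_xw₂ : G.Adj x w₂
  adj_y_iff : ∀ v, G.Adj y v ↔ v = x ∨ v = u₁ ∨ v = u₂
  adj_z_iff : ∀ v, G.Adj z v ↔ v = x ∨ v = w₁ ∨ v = w₂
  ne_yz : y ≠ z
  not_adj_yz : ¬ G.Adj y z
  w₁_ne_w₂ : w₁ ≠ w₂

namespace IsButterflyFrame

variable {G : SimpleGraph V} {x y z u₁ u₂ w₁ w₂ : V}

theorem swap_u (hF : IsButterflyFrame G x y z u₁ u₂ w₁ w₂) :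
    IsButterflyFrame G x y z u₂ u₁ w₁ w₂ :=
  { hF with
    adj_xu₁ := hF.adj_xu₂
    adj_xu₂ := hF.adj_xu₁
    adj_y_iff := fun v => by rw [hF.adj_y_iff v, or_comm (a := v = u₁)] }

theorem swap_w (hF : IsButterflyFrame G x y z u₁ u₂ w₁ w₂) :
    IsButterflyFrame G x y z u₁ u₂ w₂ w₁ :=
  { hF with
    adj_xw₁ := hF.adj_xw₂
    adj_xw₂ := hF.adj_xw₁
    adj_z_iff := fun v => by rw [hF.adj_z_iff v, or_comm (a := v = w₁)]
    w₁_ne_w₂ := hF.w₁_ne_w₂.symm }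

variable (hF : IsButterflyFrame G x y z u₁ u₂ w₁ w₂)
include hF

theorem adj_yu₁ : G.Adj y u₁ := (hF.adj_y_iff u₁).2 (by simp)

theorem adj_zw₁ : G.Adj z w₁ := (hF.adj_z_iff w₁).2 (by simp)

theorem adj_zw₂ : G.Adj z w₂ := (hF.adj_z_iff w₂).2 (by simp)

theorem adj_yu₂ : G.Adj y u₂ := hF.swap_u.adj_yu₁

theorem w₁_ne_y : w₁ ≠ y := fun h => hF.not_adj_yz (h ▸ hF.adj_zw₁.symm)

theorem w₂_ne_y : w₂ ≠ y := hF.swap_w.w₁_ne_y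

theorem u₁_ne_z : u₁ ≠ z := fun h => hF.not_adj_yz (h ▸ hF.adj_yu₁)

variable {π : Sym2 V → Option (Fin 8)} (hπ : IsProperPEC G 8 π)
include hπ

theorem freeAt_z {c s₁ s₂ γ : Fin 8} (hxz : π s(x, z) = some c) (hzw₁ : π s(z, w₁) = some s₁)
    (hzw₂ : π s(z, w₂) = some s₂) (hγc : γ ≠ c) (hγ₁ : γ ≠ s₁) (hγ₂ : γ ≠ s₂) :
    freeAt π z γ :=
  freeAt_of_adj_iff hπ hF.adj_z_iff (by rw [Sym2.eq_swap, hxz]; simpa using hγc.symm)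
    (by rw [hzw₁]; simpa using hγ₁.symm) (by rw [hzw₂]; simpa using hγ₂.symm)

variable (huncol : π s(x, y) = none)
include huncol

theorem freeAt_y {p q γ : Fin 8} (hyu₁ : π s(y, u₁) = some p) (hyu₂ : π s(y, u₂) = some q)
    (hγp : γ ≠ p) (hγq : γ ≠ q) : freeAt π y γ :=
  freeAt_of_adj_iff hπ hF.adj_y_iff (by rw [Sym2.eq_swap, huncol]; simp)
    (by rw [hyu₁]; simpa using hγp.symm) (by rw [hyu₂]; simpa using hγq.symm)

theorem hasSomeType_of_crossing {a c₀ s₁ s₂ α : Fin 8} (hax : freeAt π x a) (hza : freeAt π z a)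
    (hyu₁ : π s(y, u₁) = some a) (hyu₂ : π s(y, u₂) = some c₀) (hxz : π s(x, z) = some c₀)
    (hxw₁ : π s(x, w₁) = some s₂) (hxw₂ : π s(x, w₂) = some s₁) (hzw₁ : π s(z, w₁) = some s₁)
    (hzw₂ : π s(z, w₂) = some s₂) (hxu₁ : π s(x, u₁) = some α) (hαs₁ : α ≠ s₁) :
    HasSomeType G π x y := by
  have hzx : π s(z, x) = some c₀ := by rwa [Sym2.eq_swap]
  have hs₁a : s₁ ≠ a := hza.ne (Sym2.mem_mk_left z w₁) hzw₁
  have hs₂a : s₂ ≠ a := hza.ne (Sym2.mem_mk_left z w₂) hzw₂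
  have hs₁c : s₁ ≠ c₀ := hπ.color_ne_left hF.adj_xw₁.ne' hzx hzw₁
  have hs₂c : s₂ ≠ c₀ := hπ.color_ne_left hF.adj_xw₂.ne' hzx hzw₂
  have hs₁₂ : s₁ ≠ s₂ := hπ.color_ne_left hF.w₁_ne_w₂ hzw₂ hzw₁
  have hfy {γ : Fin 8} := hF.freeAt_y hπ huncol (γ := γ) hyu₁ hyu₂
  rcases hasType1_or_chainPathEndpoints hπ hF.adj_xy.ne hax (hfy hs₁a hs₁c) with h | hpath
  · exact h.hasSomeType hs₁a.symm
  -- type 2 through `u₁` needs `π(xu₁)` to be one of its two colors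
  obtain ⟨d, p, q, hda, hdc, hd₁, hd₂, hxu₁p, hpq⟩ : ∃ d p q, d ≠ a ∧ d ≠ c₀ ∧ d ≠ s₁ ∧ d ≠ s₂ ∧
      π s(x, u₁) = some p ∧ (p = s₂ ∧ q = d ∨ p = d ∧ q = s₂) := by
    by_cases hαs₂ : α = s₂
    · obtain ⟨d, hd⟩ := exists_notMem_of_card_lt (s := {a, c₀, s₁, s₂})
        (Finset.card_le_four.trans_lt (by norm_num))
      simp only [Finset.mem_insert, Finset.mem_singleton, not_or] at hd
      exact ⟨d, s₂, d, hd.1, hd.2.1, hd.2.2.1, hd.2.2.2, hαs₂ ▸ hxu₁, .inl ⟨rfl, rfl⟩⟩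
    · exact ⟨α, α, s₂, hax.ne (Sym2.mem_mk_left x u₁) hxu₁,
        hπ.color_ne_left hF.u₁_ne_z hxz hxu₁, hαs₁, hαs₂, hxu₁, .inr ⟨rfl, rfl⟩⟩
  rcases hasType6_or_hasType2 hF.adj_xw₁ hF.adj_xw₂ hF.adj_zw₁ hF.adj_zw₂ hF.w₁_ne_w₂
      hF.adj_xz.ne' hF.ne_yz.symm hF.w₁_ne_y hF.w₂_ne_y hxw₁ hxw₂ hzw₁ hzw₂
      (chainPathEndpoints_comm.mp hpath) hax (hfy hs₁a hs₁c) (hfy hs₂a hs₂c) (hfy hda hdc) hza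
      (hF.freeAt_z hπ hxz hzw₁ hzw₂ hdc hd₁ hd₂) hF.adj_xu₁ hF.adj_yu₁ hyu₁ hxu₁p hpq with h | h
  · exact h.hasSomeType hs₁a hs₁₂ hd₁.symm hs₂a.symm hda.symm hd₂.symm
  · rcases hpq with ⟨rfl, rfl⟩ | ⟨rfl, rfl⟩
    exacts [h.hasSomeType hd₂.symm, h.hasSomeType hd₂]

variable (hcol : ColoredNear G π x y)
include hcol

theorem hasType0_of_color_zw₁ [DecidableEq V] {a c₀ : Fin 8} (hax : freeAt π x a)
    (hyu₁ : π s(y, u₁) = some a) (hyu₂ : π s(y, u₂) = some c₀) (hxz : π s(x, z) = some c₀)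
    (hzw₁ : π s(z, w₁) = some a) : HasType0 G π x y := by
  obtain ⟨s₂, hzw₂⟩ := exists_color_of_adj_adj hcol hF.adj_xz hF.ne_yz.symm hF.adj_zw₂
  obtain ⟨β₁, hxw₁⟩ := exists_color_of_adj_left hcol hF.adj_xw₁ hF.w₁_ne_y
  have hx {w : V} {β : Fin 8} (hw : w ≠ z) (h : π s(x, w) = some β) : β ≠ a ∧ β ≠ c₀ :=
    ⟨hax.ne (Sym2.mem_mk_left x w) h, hπ.color_ne_left hw hxz h⟩
  have hfree {β : Fin 8} (ha : β ≠ a) (hc : β ≠ c₀) (hs : β ≠ s₂) :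
      freeAt π y β ∧ freeAt π z β :=
    ⟨hF.freeAt_y hπ huncol hyu₁ hyu₂ ha hc, hF.freeAt_z hπ hxz hzw₁ hzw₂ hc ha hs⟩
  by_cases hβs : β₁ = s₂
  · subst hβs
    obtain ⟨β₂, hxw₂⟩ := exists_color_of_adj_left hcol hF.adj_xw₂ hF.w₂_ne_y
    obtain ⟨hβ₂a, hβ₂c⟩ := hx hF.adj_zw₂.ne' hxw₂
    obtain ⟨hy, hz⟩ := hfree hβ₂a hβ₂c (hπ.color_ne_left hF.w₁_ne_w₂.symm hxw₁ hxw₂)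
    exact hasType0_of_doubleSwap hπ hF.adj_xy hcol hF.adj_xz hF.adj_xw₁ hF.adj_xw₂ hF.adj_zw₁
      hF.adj_zw₂ hF.ne_yz hF.w₁_ne_y.symm hF.w₂_ne_y.symm hF.w₁_ne_w₂ hxw₁ hzw₁ hzw₂ hxw₂ hax hy hz
  · obtain ⟨hβ₁a, hβ₁c⟩ := hx hF.adj_zw₁.ne' hxw₁
    obtain ⟨hy, hz⟩ := hfree hβ₁a hβ₁c hβs
    exact hasType0_of_swap hπ hF.adj_xy hcol hF.adj_xz hF.adj_xw₁ hF.adj_zw₁ hF.ne_yz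
      hF.w₁_ne_y.symm hxw₁ hzw₁ hax hy hz

theorem hasSomeType_of_color_xw₁ {a c₀ β s₂ : Fin 8} (hax : freeAt π x a) (hza : freeAt π z a)
    (hyu₁ : π s(y, u₁) = some a) (hyu₂ : π s(y, u₂) = some c₀) (hxz : π s(x, z) = some c₀)
    (hxw₁ : π s(x, w₁) = some β) (hzw₂ : π s(z, w₂) = some s₂) (hβs : β ≠ s₂) :
    HasSomeType G π x y := by
  obtain ⟨s₁, hzw₁⟩ := exists_color_of_adj_adj hcol hF.adj_xz hF.ne_yz.symm hF.adj_zw₁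
  have hs₁a : s₁ ≠ a := hza.ne (Sym2.mem_mk_left z w₁) hzw₁
  have hs₁c : s₁ ≠ c₀ := hπ.color_ne_left hF.adj_xw₁.ne' (by rwa [Sym2.eq_swap]) hzw₁
  have hβa : β ≠ a := hax.ne (Sym2.mem_mk_left x w₁) hxw₁
  have hβc : β ≠ c₀ := hπ.color_ne_left hF.adj_zw₁.ne' hxz hxw₁
  have hβs₁ : β ≠ s₁ := hπ.color_ne hzw₁ hxw₁ (Sym2.mem_mk_right z w₁) (Sym2.mem_mk_right x w₁)
    (by simp [hF.adj_xz.ne, hF.adj_xw₁.ne])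
  rcases hasType1_or_hasType5 hπ hF.adj_xy.ne hF.adj_xw₁ hF.adj_zw₁ hF.adj_xz.ne' hF.ne_yz.symm
      hF.w₁_ne_y hxw₁ hzw₁ hax hza (hF.freeAt_y hπ huncol hyu₁ hyu₂ hs₁a hs₁c)
      (hF.freeAt_y hπ huncol hyu₁ hyu₂ hβa hβc) (hF.freeAt_z hπ hxz hzw₁ hzw₂ hβc hβs₁ hβs)
    with h | h
  exacts [h.hasSomeType hs₁a.symm, h.hasSomeType hs₁a]

theorem hasSomeType_of_freeAt_z {a c₀ : Fin 8} (hax : freeAt π x a) (hza : freeAt π z a)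
    (hyu₁ : π s(y, u₁) = some a) (hyu₂ : π s(y, u₂) = some c₀) (hxz : π s(x, z) = some c₀) :
    HasSomeType G π x y := by
  obtain ⟨β₁, hxw₁⟩ := exists_color_of_adj_left hcol hF.adj_xw₁ hF.w₁_ne_y
  obtain ⟨s₂, hzw₂⟩ := exists_color_of_adj_adj hcol hF.adj_xz hF.ne_yz.symm hF.adj_zw₂
  by_cases hβ₁ : β₁ = s₂
  swap
  · exact hF.hasSomeType_of_color_xw₁ hπ huncol hcol hax hza hyu₁ hyu₂ hxz hxw₁ hzw₂ hβ₁
  rw [hβ₁] at hxw₁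
  obtain ⟨β₂, hxw₂⟩ := exists_color_of_adj_left hcol hF.adj_xw₂ hF.w₂_ne_y
  obtain ⟨s₁, hzw₁⟩ := exists_color_of_adj_adj hcol hF.adj_xz hF.ne_yz.symm hF.adj_zw₁
  by_cases hβ₂ : β₂ = s₁
  swap
  · exact hF.swap_w.hasSomeType_of_color_xw₁ hπ huncol hcol hax hza hyu₁ hyu₂ hxz hxw₂ hzw₁ hβ₂
  rw [hβ₂] at hxw₂
  obtain ⟨α, hxu₁⟩ := exists_color_of_adj_left hcol hF.adj_xu₁ hF.adj_yu₁.ne'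
  by_cases hα : α = s₁
  · refine hF.swap_w.hasSomeType_of_crossing hπ huncol hax hza hyu₁ hyu₂ hxz hxw₂ hxw₁ hzw₂ hzw₁
      hxu₁ ?_
    rw [hα]
    exact hπ.color_ne_left hF.w₁_ne_w₂ hzw₂ hzw₁
  · exact hF.hasSomeType_of_crossing hπ huncol hax hza hyu₁ hyu₂ hxz hxw₁ hxw₂ hzw₁ hzw₂ hxu₁ hα

theorem hasSomeType_of_color_yu₂ [DecidableEq V] {a c₀ : Fin 8} (hax : freeAt π x a)
    (hyu₁ : π s(y, u₁) = some a) (hyu₂ : π s(y, u₂) = some c₀) (hxz : π s(x, z) = some c₀) :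
    HasSomeType G π x y := by
  obtain ⟨s₁, hzw₁⟩ := exists_color_of_adj_adj hcol hF.adj_xz hF.ne_yz.symm hF.adj_zw₁
  obtain ⟨s₂, hzw₂⟩ := exists_color_of_adj_adj hcol hF.adj_xz hF.ne_yz.symm hF.adj_zw₂
  by_cases h₁ : s₁ = a
  · exact (hF.hasType0_of_color_zw₁ hπ huncol hcol hax hyu₁ hyu₂ hxz (h₁ ▸ hzw₁)).hasSomeType
  by_cases h₂ : s₂ = a
  · exact (hF.swap_w.hasType0_of_color_zw₁ hπ huncol hcol hax hyu₁ hyu₂ hxz (h₂ ▸ hzw₂)).hasSomeType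
  have hza : freeAt π z a :=
    hF.freeAt_z hπ hxz hzw₁ hzw₂ (hax.ne (Sym2.mem_mk_left x z) hxz).symm (Ne.symm h₁) (Ne.symm h₂)
  exact hF.hasSomeType_of_freeAt_z hπ huncol hcol hax hza hyu₁ hyu₂ hxz

theorem hasSomeType_of_color_yu₁ [DecidableEq V] {a : Fin 8} (hax : freeAt π x a)
    (hyu₁ : π s(y, u₁) = some a) : HasSomeType G π x y := by
  obtain ⟨c₀, hxz⟩ := exists_color_of_adj_left hcol hF.adj_xz hF.ne_yz.symm
  obtain ⟨q, hyu₂⟩ := exists_color_of_adj_right hcol hF.adj_yu₂ hF.adj_xu₂.ne'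
  by_cases hq : q = c₀
  · exact hF.hasSomeType_of_color_yu₂ hπ huncol hcol hax hyu₁ (hq ▸ hyu₂) hxz
  obtain ⟨s₁, hzw₁⟩ := exists_color_of_adj_adj hcol hF.adj_xz hF.ne_yz.symm hF.adj_zw₁
  obtain ⟨s₂, hzw₂⟩ := exists_color_of_adj_adj hcol hF.adj_xz hF.ne_yz.symm hF.adj_zw₂
  obtain ⟨b, hb⟩ := exists_notMem_of_card_lt (s := {a, q, c₀, s₁, s₂})
    (Finset.card_le_five.trans_lt (by norm_num))
  simp only [Finset.mem_insert, Finset.mem_singleton, not_or] at hb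
  obtain ⟨hba, hbq, hbc, hb₁, hb₂⟩ := hb
  rcases hasType1_or_hasType3 hπ hF.adj_xy.ne hF.adj_xz hxz hax
      (hF.freeAt_y hπ huncol hyu₁ hyu₂ hba hbq)
      (hF.freeAt_y hπ huncol hyu₁ hyu₂ (hax.ne (Sym2.mem_mk_left x z) hxz) (Ne.symm hq))
      (hF.freeAt_z hπ hxz hzw₁ hzw₂ hbc hb₁ hb₂) with h | h
  exacts [h.hasSomeType (Ne.symm hba), h.hasSomeType (Ne.symm hba)]

theorem hasSomeType [DecidableEq V] {a : Fin 8} (hax : freeAt π x a) : HasSomeType G π x y := by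
  obtain ⟨p, hyu₁⟩ := exists_color_of_adj_right hcol hF.adj_yu₁ hF.adj_xu₁.ne'
  obtain ⟨q, hyu₂⟩ := exists_color_of_adj_right hcol hF.adj_yu₂ hF.adj_xu₂.ne'
  by_cases hp : p = a
  · exact hF.hasSomeType_of_color_yu₁ hπ huncol hcol hax (hp ▸ hyu₁)
  by_cases hq : q = a
  · exact hF.swap_u.hasSomeType_of_color_yu₁ hπ huncol hcol hax (hq ▸ hyu₂)
  exact (hasType0_of_freeAt hπ hF.adj_xy hcol hax
    (hF.freeAt_y hπ huncol hyu₁ hyu₂ (Ne.symm hp) (Ne.symm hq))).hasSomeType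

end IsButterflyFrame

theorem adj_iff_of_degree_eq_three [Fintype V] [DecidableEq V] {G : SimpleGraph V}
    [DecidableRel G.Adj] {v a b c : V} (hdeg : G.degree v = 3) (ha : G.Adj v a) (hb : G.Adj v b)
    (hc : G.Adj v c) (hab : a ≠ b) (hac : a ≠ c) (hbc : b ≠ c) :
    ∀ t, G.Adj v t ↔ t = a ∨ t = b ∨ t = c := by
  have hsub : ({a, b, c} : Finset V) ⊆ G.neighborFinset v := by
    intro t
    simp only [Finset.mem_insert, Finset.mem_singleton, mem_neighborFinset]
    rintro (rfl | rfl | rfl) <;> assumption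
  have hcard : ({a, b, c} : Finset V).card = 3 :=
    Finset.card_eq_three.mpr ⟨a, b, c, hab, hac, hbc, rfl⟩
  have heq :=
    Finset.eq_of_subset_of_card_le hsub (by rw [card_neighborFinset_eq_degree, hdeg, hcard])
  intro t
  rw [← mem_neighborFinset, ← heq]
  simp

section Butterfly

variable [Fintype V] [DecidableEq V] {G : SimpleGraph V} [DecidableRel G.Adj] {x y z : V}

theorem IsButterflyB1.isButterflyFrame {v₁ v₂ v₃ : V} (h : IsButterflyB1 G x y z v₁ v₂ v₃) :
    IsButterflyFrame G x y z v₁ v₃ v₁ v₂ := by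
  obtain ⟨hpw, hxy, hxz, hyv₁, hyv₃, hzv₁, hzv₂, hxv₁, hxv₂, hxv₃, hdy, hdz, -⟩ := h
  simp only [List.pairwise_cons, List.mem_cons, List.not_mem_nil, or_false, forall_eq_or_imp,
    forall_eq, List.Pairwise.nil, and_true, ne_eq] at hpw
  obtain ⟨⟨-, hxz', hxv₁', hxv₂', hxv₃'⟩, ⟨hyz, -⟩, ⟨hzv₁', -, hzv₃'⟩, ⟨hv₁₂, hv₁₃⟩, -⟩ := hpw
  have hy := adj_iff_of_degree_eq_three hdy hxy.symm hyv₁ hyv₃ hxv₁' hxv₃' hv₁₃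
  refine ⟨hxy, hxz, hxv₁, hxv₃, hxv₁, hxv₂, hy,
    adj_iff_of_degree_eq_three hdz hxz.symm hzv₁ hzv₂ hxv₁' hxv₂' hv₁₂, hyz, fun hyz' => ?_, hv₁₂⟩
  rcases (hy z).1 hyz' with h | h | h
  exacts [hxz' h.symm, hzv₁' h, hzv₃' h]

theorem IsButterflyB2.isButterflyFrame {v₁ v₂ v₃ v₄ : V}
    (h : IsButterflyB2 G x y z v₁ v₂ v₃ v₄) : IsButterflyFrame G x y z v₁ v₄ v₂ v₃ := by
  obtain ⟨hpw, hxy, hxz, hyv₁, hyv₄, hzv₂, hzv₃, hxv₁, hxv₂, hxv₃, hxv₄, hdy, hdz, -⟩ := h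
  simp only [List.pairwise_cons, List.mem_cons, List.not_mem_nil, or_false, forall_eq_or_imp,
    forall_eq, List.Pairwise.nil, and_true, ne_eq] at hpw
  obtain ⟨⟨-, hxz', hxv₁', hxv₂', hxv₃', hxv₄'⟩, ⟨hyz, -⟩, ⟨hzv₁', -, -, hzv₄'⟩,
    ⟨-, -, hv₁₄⟩, ⟨hv₂₃, -⟩, -⟩ := hpw
  have hy := adj_iff_of_degree_eq_three hdy hxy.symm hyv₁ hyv₄ hxv₁' hxv₄' hv₁₄
  refine ⟨hxy, hxz, hxv₁, hxv₄, hxv₂, hxv₃, hy,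
    adj_iff_of_degree_eq_three hdz hxz.symm hzv₂ hzv₃ hxv₂' hxv₃' hv₂₃, hyz, fun hyz' => ?_, hv₂₃⟩
  rcases (hy z).1 hyz' with h | h | h
  exacts [hxz' h.symm, hzv₁' h, hzv₄' h]

theorem IsButterflyLikeAt.exists_isButterflyFrame (h : IsButterflyLikeAt G x y) :
    ∃ z u₁ u₂ w₁ w₂, IsButterflyFrame G x y z u₁ u₂ w₁ w₂ := by
  rcases h with ⟨z, _, _, _, hB⟩ | ⟨z, _, _, _, _, hB⟩
  exacts [⟨z, _, _, _, _, hB.isButterflyFrame⟩, ⟨z, _, _, _, _, hB.isButterflyFrame⟩]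

end Butterfly

end

/-- Every uncolored butterfly-like edge whose surrounding edges (at distance at most 1) are
all colored has at least one of the types `0`, `1_{ab}`, `2_{ab}`, `3_{ab}`, `4_{ab}`,
`5_{ab}`, `6_{abcd}` for some pairwise distinct colors `a`, `b`, `c`, `d`. -/
theorem stmt9 {V : Type} [Fintype V] [DecidableEq V] (G : SimpleGraph V) [DecidableRel G.Adj]
    (hΔ : G.maxDegree ≤ 8) (π : Sym2 V → Option (Fin 8)) (hπ : IsProperPEC G 8 π)
    (x y : V) (hbf : IsButterflyLikeAt G x y) (huncol : π s(x, y) = none)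
    (hcol : ∀ e ∈ G.edgeSet, e ≠ s(x, y) → edgeDistLE G 1 e s(x, y) → π e ≠ none) :
    HasType0 G π x y ∨
    (∃ a b : Fin 8, a ≠ b ∧
      (HasType1 π x y a b ∨ HasType2 G π x y a b ∨ HasType3 G π x y a b ∨
        HasType4 G π x y a b ∨ HasType5 G π x y a b)) ∨
    (∃ a b c d : Fin 8, a ≠ b ∧ a ≠ c ∧ a ≠ d ∧ b ≠ c ∧ b ≠ d ∧ c ≠ d ∧
      HasType6 G π x y a b c d) := by
  obtain ⟨z, u₁, u₂, w₁, w₂, hF⟩ := hbf.exists_isButterflyFrame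
  obtain ⟨a, hax⟩ :=
    exists_freeAt_of_degree_le hπ ((G.degree_le_maxDegree x).trans hΔ) hF.adj_xy huncol
  exact hF.hasSomeType hπ huncol hcol hax
end

section
/- Let G = (V, E) be a simple graph with Δ(G) ≤ 8, let π be a partial 8-edge-coloring of G, and let E_{ab} ⊆ E be a set of uncolored butterfly-like edges of type 2_{ab} for some distinct colors a, b ∈ {1,…,8}, which are pairwise 2-independent. Then there exists a partial 8-edge-coloring σ of G with the same set of colored edges as π such that every edge of E_{ab} has type 1_{ab} with respect to σ. -/
open SimpleGraph

/-!
For each edge `xy` of type `2_{ab}`, with common neighbour `z` and `c` free at `x`, exchange the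
colours of `xz` (which is `a`) and `yz` (which is `c`). At every vertex this just permutes the
colours `a` and `c`, so the colouring stays proper, `a` becomes free at `x`, and `b` stays free at
`y`, which is now a leaf of the `(a,b)`-chains hanging off `z`. By 2-independence the triangles
`xyz` are pairwise disjoint, so the swaps do not interfere. If `x` and `y` were on a common new
chain, its part from `x` to `z` could pass through no leaf `y'`, hence would consist of old
`(a,b)`-edges other than `xz`, closing a cycle with `xz`. As `(a,b)`-chains have maximum degree
two, the old chain through `x` would then be that cycle, contradicting type `2_{ab}`.
-/

namespace SimpleGraph

variable {V : Type*} {H K : SimpleGraph V} {u v w : V}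

lemma Walk.IsPath.eq_or_eq_of_subsingleton_neighborSet {p : H.Walk u w} (hp : p.IsPath)
    (hv : v ∈ p.support) (hleaf : (H.neighborSet v).Subsingleton) : v = u ∨ v = w := by
  obtain ⟨n, rfl, hn⟩ := Walk.mem_support_iff_exists_getVert.mp hv
  rcases Nat.eq_zero_or_pos n with rfl | hpos
  · exact Or.inl p.getVert_zero
  rcases hn.eq_or_lt with rfl | hlt
  · exact Or.inr p.getVert_length
  have hprev : H.Adj (p.getVert n) (p.getVert (n - 1)) := by
    simpa [Nat.sub_add_cancel hpos] using (p.adj_getVert_succ (i := n - 1) (by omega)).symm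
  have hnext : H.Adj (p.getVert n) (p.getVert (n + 1)) := p.adj_getVert_succ hlt
  have := hp.getVert_injOn (show n - 1 ≤ p.length by omega) (show n + 1 ≤ p.length by omega)
    (hleaf hprev hnext)
  omega

/-- A path between vertices outside `L` cannot pass through the leaves in `L`. -/
lemma Reachable.of_adj_off_leaves {L : Set V} (hL : ∀ v ∈ L, (H.neighborSet v).Subsingleton)
    (hHK : ∀ u w, H.Adj u w → u ∉ L → w ∉ L → K.Adj u w) (hu : u ∉ L) (hw : w ∉ L)
    (h : H.Reachable u w) : K.Reachable u w := by
  classical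
  obtain ⟨p⟩ := h
  have hoff : ∀ v ∈ p.bypass.support, v ∉ L := fun v hv hvL => by
    rcases p.bypass_isPath.eq_or_eq_of_subsingleton_neighborSet hv (hL v hvL) with rfl | rfl
    exacts [hu hvL, hw hvL]
  have hedges : ∀ e ∈ p.bypass.edges, e ∈ K.edgeSet := by
    intro e he
    induction e using Sym2.ind with
    | h u' w' =>
      exact hHK u' w' (p.bypass.adj_of_mem_edges he)
        (hoff u' (p.bypass.fst_mem_support_of_mem_edges he))
        (hoff w' (p.bypass.snd_mem_support_of_mem_edges he))
  exact (p.bypass.transfer K hedges).reachable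

/-- In a graph of maximum degree two, a cycle is a whole connected component. -/
lemma Walk.IsCycle.not_subsingleton_neighborSet_of_reachable
    (hdeg : ∀ u t₁ t₂ t₃, K.Adj u t₁ → K.Adj u t₂ → K.Adj u t₃ → t₁ = t₂ ∨ t₁ = t₃ ∨ t₂ = t₃)
    {C : K.Walk u u} (hC : C.IsCycle) (hv : v ∈ C.support) (h : K.Reachable v w) :
    ¬ (K.neighborSet w).Subsingleton := by
  have htwo : ∀ v ∈ C.toSubgraph.verts, ∃ t₁ t₂, t₁ ≠ t₂ ∧
      C.toSubgraph.Adj v t₁ ∧ C.toSubgraph.Adj v t₂ := by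
    intro v hv
    obtain ⟨t₁, t₂, hne, heq⟩ := Set.ncard_eq_two.mp
      (hC.ncard_neighborSet_toSubgraph_eq_two ((Walk.mem_verts_toSubgraph C).mp hv))
    exact ⟨t₁, t₂, hne, show t₁ ∈ C.toSubgraph.neighborSet v by simp [heq],
      show t₂ ∈ C.toSubgraph.neighborSet v by simp [heq]⟩
  have hclosed : ∀ v ∈ C.toSubgraph.verts, ∀ t, K.Adj v t → C.toSubgraph.Adj v t := by
    intro v hv t ht
    obtain ⟨t₁, t₂, hne, h₁, h₂⟩ := htwo v hv
    rcases hdeg v t₁ t₂ t h₁.adj_sub h₂.adj_sub ht with h | rfl | rfl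
    exacts [absurd h hne, h₁, h₂]
  obtain ⟨t₁, t₂, hne, h₁, h₂⟩ :=
    htwo w (h.mem_subgraphVerts hclosed ((Walk.mem_verts_toSubgraph C).mpr hv))
  exact fun hsub => hne (hsub h₁.adj_sub h₂.adj_sub)

end SimpleGraph

section Coloring

variable {V : Type} {G : SimpleGraph V} {D : ℕ} {π σ : Sym2 V → Option (Fin D)}
  {a b k : Fin D} {u v w : V}

lemma IsProperPEC.adj (hπ : IsProperPEC G D π) (h : π s(u, w) = some k) : G.Adj u w :=
  hπ.1 s(u, w) (by simp [h])

lemma IsProperPEC.eq_of_mem_of_eq_some (hπ : IsProperPEC G D π) {e₁ e₂ : Sym2 V}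
    (h₁ : v ∈ e₁) (h₂ : v ∈ e₂) (he₁ : π e₁ = some k) (he₂ : π e₂ = some k) : e₁ = e₂ := by
  by_contra hne
  exact hπ.2 e₁ e₂ hne ⟨v, h₁, h₂⟩ (by simp [he₁]) (he₁.trans he₂.symm)

lemma IsProperPEC.eq_of_eq_some (hπ : IsProperPEC G D π) {w₁ w₂ : V}
    (h₁ : π s(v, w₁) = some k) (h₂ : π s(v, w₂) = some k) : w₁ = w₂ :=
  Sym2.congr_right.mp
    (hπ.eq_of_mem_of_eq_some (Sym2.mem_mk_left _ _) (Sym2.mem_mk_left _ _) h₁ h₂)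

lemma chainGraph_adj :
    (chainGraph π a b).Adj u w ↔ (π s(u, w) = some a ∨ π s(u, w) = some b) ∧ u ≠ w := by
  simp [chainGraph]

lemma IsProperPEC.eq_or_eq_or_eq_of_chainGraph_adj (hπ : IsProperPEC G D π) (u t₁ t₂ t₃ : V)
    (h₁ : (chainGraph π a b).Adj u t₁) (h₂ : (chainGraph π a b).Adj u t₂)
    (h₃ : (chainGraph π a b).Adj u t₃) : t₁ = t₂ ∨ t₁ = t₃ ∨ t₂ = t₃ := by
  rw [chainGraph_adj] at h₁ h₂ h₃
  rcases h₁.1 with h₁ | h₁ <;> rcases h₂.1 with h₂ | h₂ <;> rcases h₃.1 with h₃ | h₃ <;>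
    first
      | exact Or.inl (hπ.eq_of_eq_some h₁ h₂)
      | exact Or.inr (Or.inl (hπ.eq_of_eq_some h₁ h₃))
      | exact Or.inr (Or.inr (hπ.eq_of_eq_some h₂ h₃))

lemma IsProperPEC.inChainCycle_of_isCycle (hπ : IsProperPEC G D π)
    {C : (chainGraph π a b).Walk u u} (hC : C.IsCycle) (hv : v ∈ C.support) :
    inChainCycle π a b v := fun _ h =>
  hC.not_subsingleton_neighborSet_of_reachable hπ.eq_or_eq_or_eq_of_chainGraph_adj hv h

lemma Option.map_perm_eq_some_iff (f : Equiv.Perm (Fin D)) (o : Option (Fin D)) :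
    o.map f = some k ↔ o = some (f.symm k) := by
  cases o <;> simp [Equiv.eq_symm_apply]

section LocallyPermuted

variable (hσ : ∀ v, ∃ f : Equiv.Perm (Fin D), ∀ e, v ∈ e → σ e = (π e).map f)
include hσ

lemma ne_none_iff_of_locally_perm (e : Sym2 V) : σ e ≠ none ↔ π e ≠ none := by
  induction e using Sym2.ind with
  | h u w =>
    obtain ⟨f, hf⟩ := hσ u
    simp [hf _ (Sym2.mem_mk_left u w)]

lemma IsProperPEC.of_locally_perm (hπ : IsProperPEC G D π) : IsProperPEC G D σ := by
  refine ⟨fun e he => hπ.1 e ((ne_none_iff_of_locally_perm hσ e).mp he), ?_⟩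
  rintro e₁ e₂ hne ⟨v, h₁, h₂⟩ hnone heq
  obtain ⟨f, hf⟩ := hσ v
  rw [hf e₁ h₁, hf e₂ h₂] at heq
  exact hπ.2 e₁ e₂ hne ⟨v, h₁, h₂⟩ ((ne_none_iff_of_locally_perm hσ e₁).mp hnone)
    (Option.map_injective f.injective heq)

end LocallyPermuted

lemma freeAt_of_forall_mem_eq_map {f : Equiv.Perm (Fin D)}
    (hσ : ∀ e, v ∈ e → σ e = (π e).map f) (hfree : freeAt π v k) : freeAt σ v (f k) := by
  intro e he
  rw [hσ e he, ne_eq, Option.map_perm_eq_some_iff, Equiv.symm_apply_apply]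
  exact hfree e he

end Coloring

section Distance

variable {V : Type} {G : SimpleGraph V} {k l : ℕ} {v x y z : V} {e₁ e₂ : Sym2 V}

lemma edgeDistLE_of_vtxEdgeDistLE (h₁ : vtxEdgeDistLE G k v e₁) (h₂ : vtxEdgeDistLE G l v e₂) :
    edgeDistLE G (k + l) e₁ e₂ := by
  obtain ⟨u₁, hu₁, p₁, hp₁⟩ := h₁
  obtain ⟨u₂, hu₂, p₂, hp₂⟩ := h₂
  exact ⟨u₁, hu₁, u₂, hu₂, p₁.reverse.append p₂, by
    rw [Walk.length_append, Walk.length_reverse]; omega⟩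

lemma vtxEdgeDistLE_one_of_mem_triangle (hxz : G.Adj x z) (hv : v ∈ ({x, y, z} : Set V)) :
    vtxEdgeDistLE G 1 v s(x, y) := by
  rcases hv with rfl | rfl | rfl
  · exact ⟨v, Sym2.mem_mk_left _ _, .nil, zero_le_one⟩
  · exact ⟨v, Sym2.mem_mk_right _ _, .nil, zero_le_one⟩
  · exact ⟨x, Sym2.mem_mk_left _ _, .cons hxz.symm .nil, le_rfl⟩

end Distance

section Type2Witness

variable {V : Type} {D : ℕ} {π : Sym2 V → Option (Fin D)} {a b c : Fin D} {x y z : V}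

/-- The data of an edge `xy` of type `2_{ab}` (`HasType2`), without the adjacencies, which follow
from properness. -/
structure Type2Witness (π : Sym2 V → Option (Fin D)) (x y z : V) (a b c : Fin D) : Prop where
  free_a : freeAt π y a
  free_b : freeAt π y b
  c_ne_b : c ≠ b
  free_c : freeAt π x c
  color_yz : π s(y, z) = some c
  color_xz : π s(x, z) = some a
  not_inChainCycle : ¬ inChainCycle π a b x

lemma HasType2.exists_type2Witness {G : SimpleGraph V} {π : Sym2 V → Option (Fin 8)}
    {a b : Fin 8} (h : HasType2 G π x y a b) : ∃ c z, Type2Witness π x y z a b c := by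
  obtain ⟨ha, hb, c, hcb, hc, z, -, -, hyz, hxz, hcyc⟩ := h
  exact ⟨c, z, ha, hb, hcb, hc, hyz, hxz, hcyc⟩

namespace Type2Witness

variable {G : SimpleGraph V} (hwit : Type2Witness π x y z a b c)
include hwit

lemma x_ne_y : x ≠ y := by
  rintro rfl
  exact hwit.free_a _ (Sym2.mem_mk_left _ _) hwit.color_xz

lemma c_ne_a : c ≠ a := by
  rintro rfl
  exact hwit.free_a _ (Sym2.mem_mk_left _ _) hwit.color_yz

lemma x_ne_z (hπ : IsProperPEC G D π) : x ≠ z := (hπ.adj hwit.color_xz).ne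

lemma y_ne_z (hπ : IsProperPEC G D π) : y ≠ z := (hπ.adj hwit.color_yz).ne

end Type2Witness

end Type2Witness

section Triangles

variable {V ι : Type} {D : ℕ} {π : Sym2 V → Option (Fin D)} {a b : Fin D}

def triangle (x y z : ι → V) (i : ι) : Set V := {x i, y i, z i}

lemma x_mem_triangle (x y z : ι → V) (i : ι) : x i ∈ triangle x y z i := by simp [triangle]

lemma y_mem_triangle (x y z : ι → V) (i : ι) : y i ∈ triangle x y z i := by simp [triangle]

lemma z_mem_triangle (x y z : ι → V) (i : ι) : z i ∈ triangle x y z i := by simp [triangle]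

open Classical in
noncomputable def swapInTriangles (π : Sym2 V → Option (Fin D)) (a : Fin D) (x y z : ι → V)
    (c : ι → Fin D) (e : Sym2 V) : Option (Fin D) :=
  if h : ∃ i, ∀ v ∈ e, v ∈ triangle x y z i then (π e).map (Equiv.swap a (c h.choose)) else π e

section Family

variable {G : SimpleGraph V} {x y z : ι → V} {c : ι → Fin D} {i j : ι} {v : V} {e : Sym2 V}
  (hπ : IsProperPEC G D π) (hwit : ∀ i, Type2Witness π (x i) (y i) (z i) a b (c i))
  (hdisj : Pairwise fun i j => Disjoint (triangle x y z i) (triangle x y z j))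

include hdisj in
lemma eq_of_mem_triangle (hi : v ∈ triangle x y z i) (hj : v ∈ triangle x y z j) : i = j := by
  by_contra hij
  exact Set.disjoint_left.mp (hdisj hij) hi hj

include hπ hwit in
lemma subset_triangle_of_color (hv : v ∈ triangle x y z i) (he : v ∈ e)
    (hcol : π e = some a ∨ π e = some (c i)) : ∀ u ∈ e, u ∈ triangle x y z i := by
  have hxz : e = s(x i, z i) → ∀ u ∈ e, u ∈ triangle x y z i := by
    rintro rfl u hu
    rcases Sym2.mem_iff.mp hu with rfl | rfl <;> simp [triangle]
  have hyz : e = s(y i, z i) → ∀ u ∈ e, u ∈ triangle x y z i := by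
    rintro rfl u hu
    rcases Sym2.mem_iff.mp hu with rfl | rfl <;> simp [triangle]
  have hwit := hwit i
  rcases hv with rfl | rfl | rfl <;> rcases hcol with hcol | hcol
  · exact hxz (hπ.eq_of_mem_of_eq_some he (Sym2.mem_mk_left _ _) hcol hwit.color_xz)
  · exact absurd hcol (hwit.free_c e he)
  · exact absurd hcol (hwit.free_a e he)
  · exact hyz (hπ.eq_of_mem_of_eq_some he (Sym2.mem_mk_left _ _) hcol hwit.color_yz)
  · exact hxz (hπ.eq_of_mem_of_eq_some he (Sym2.mem_mk_right _ _) hcol hwit.color_xz)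
  · exact hyz (hπ.eq_of_mem_of_eq_some he (Sym2.mem_mk_right _ _) hcol hwit.color_yz)

include hdisj in
lemma swapInTriangles_of_subset (he : ∀ v ∈ e, v ∈ triangle x y z i) :
    swapInTriangles π a x y z c e = (π e).map (Equiv.swap a (c i)) := by
  have h : ∃ i, ∀ v ∈ e, v ∈ triangle x y z i := ⟨i, he⟩
  induction e using Sym2.ind with
  | h u w =>
    rw [swapInTriangles, dif_pos h, eq_of_mem_triangle hdisj
      (h.choose_spec u (Sym2.mem_mk_left u w)) (he u (Sym2.mem_mk_left u w))]

lemma swapInTriangles_of_not_subset (h : ¬ ∃ i, ∀ v ∈ e, v ∈ triangle x y z i) :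
    swapInTriangles π a x y z c e = π e := by
  rw [swapInTriangles, dif_neg h]

include hπ hwit hdisj in
lemma swapInTriangles_of_mem_triangle (hv : v ∈ triangle x y z i) (he : v ∈ e) :
    swapInTriangles π a x y z c e = (π e).map (Equiv.swap a (c i)) := by
  by_cases h : ∃ j, ∀ u ∈ e, u ∈ triangle x y z j
  · obtain ⟨j, hj⟩ := h
    obtain rfl := eq_of_mem_triangle hdisj (hj v he) hv
    exact swapInTriangles_of_subset hdisj hj
  · rw [swapInTriangles_of_not_subset h]
    have hcol : π e ≠ some a ∧ π e ≠ some (c i) := by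
      constructor <;> intro hcol <;>
        exact h ⟨i, subset_triangle_of_color hπ hwit hv he (by simp [hcol])⟩
    cases hπe : π e with
    | none => rfl
    | some k =>
      rw [hπe] at hcol
      simp [Equiv.swap_apply_of_ne_of_ne (fun h => hcol.1 (congrArg some h))
        (fun h => hcol.2 (congrArg some h))]

lemma swapInTriangles_of_forall_notMem (hv : ∀ i, v ∉ triangle x y z i) (he : v ∈ e) :
    swapInTriangles π a x y z c e = π e :=
  swapInTriangles_of_not_subset fun ⟨i, hi⟩ => hv i (hi v he)

include hπ hwit hdisj in
lemma swapInTriangles_locally_perm (v : V) : ∃ f : Equiv.Perm (Fin D),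
    ∀ e, v ∈ e → swapInTriangles π a x y z c e = (π e).map f := by
  by_cases hv : ∃ i, v ∈ triangle x y z i
  · obtain ⟨i, hi⟩ := hv
    exact ⟨Equiv.swap a (c i), fun e he => swapInTriangles_of_mem_triangle hπ hwit hdisj hi he⟩
  · exact ⟨1, fun e he => by simp [swapInTriangles_of_forall_notMem (not_exists.mp hv) he]⟩

include hπ hwit hdisj

lemma isProperPEC_swapInTriangles : IsProperPEC G D (swapInTriangles π a x y z c) :=
  hπ.of_locally_perm (swapInTriangles_locally_perm hπ hwit hdisj)

lemma swapInTriangles_ne_none_iff (e : Sym2 V) :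
    swapInTriangles π a x y z c e ≠ none ↔ π e ≠ none :=
  ne_none_iff_of_locally_perm (swapInTriangles_locally_perm hπ hwit hdisj) e

lemma freeAt_swapInTriangles_x (i : ι) : freeAt (swapInTriangles π a x y z c) (x i) a := by
  simpa using freeAt_of_forall_mem_eq_map
    (fun e he => swapInTriangles_of_mem_triangle hπ hwit hdisj (x_mem_triangle x y z i) he)
    (hwit i).free_c

lemma freeAt_swapInTriangles_y (hab : a ≠ b) (i : ι) :
    freeAt (swapInTriangles π a x y z c) (y i) b := by
  simpa [Equiv.swap_apply_of_ne_of_ne hab.symm (hwit i).c_ne_b.symm] using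
    freeAt_of_forall_mem_eq_map
      (fun e he => swapInTriangles_of_mem_triangle hπ hwit hdisj (y_mem_triangle x y z i) he)
      (hwit i).free_b

lemma swapInTriangles_yz (i : ι) : swapInTriangles π a x y z c s(y i, z i) = some a := by
  rw [swapInTriangles_of_mem_triangle hπ hwit hdisj (y_mem_triangle x y z i)
    (Sym2.mem_mk_left _ _), (hwit i).color_yz]
  simp

lemma swapInTriangles_xz (i : ι) : swapInTriangles π a x y z c s(x i, z i) = some (c i) := by
  rw [swapInTriangles_of_mem_triangle hπ hwit hdisj (x_mem_triangle x y z i)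
    (Sym2.mem_mk_left _ _), (hwit i).color_xz]
  simp

lemma subsingleton_neighborSet_chainGraph_swapInTriangles (hab : a ≠ b) (i : ι) :
    ((chainGraph (swapInTriangles π a x y z c) a b).neighborSet (y i)).Subsingleton := by
  suffices ∀ w, (chainGraph (swapInTriangles π a x y z c) a b).Adj (y i) w → w = z i from
    fun w₁ h₁ w₂ h₂ => (this w₁ h₁).trans (this w₂ h₂).symm
  intro w hadj
  rw [chainGraph_adj, swapInTriangles_of_mem_triangle hπ hwit hdisj (y_mem_triangle x y z i)
    (Sym2.mem_mk_left _ _), Option.map_perm_eq_some_iff, Option.map_perm_eq_some_iff,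
    Equiv.symm_swap, Equiv.swap_apply_left,
    Equiv.swap_apply_of_ne_of_ne hab.symm (hwit i).c_ne_b.symm] at hadj
  rcases hadj.1 with h | h
  · exact hπ.eq_of_eq_some h (hwit i).color_yz
  · exact absurd h ((hwit i).free_b _ (Sym2.mem_mk_left _ _))

/-- The edges `x j z j` now have colour `c j`, and all other recoloured edges contain some `y j`. -/
lemma chainGraph_swapInTriangles_adj_of_notMem_range (i : ι) {u w : V}
    (hadj : (chainGraph (swapInTriangles π a x y z c) a b).Adj u w)
    (hu : u ∉ Set.range y) (hw : w ∉ Set.range y) :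
    ((chainGraph π a b).deleteEdges {s(x i, z i)}).Adj u w := by
  by_cases h : ∃ j, ∀ v ∈ s(u, w), v ∈ triangle x y z j
  · exfalso
    obtain ⟨j, hj⟩ := h
    have hxz : ∀ v ∈ s(u, w), v = x j ∨ v = z j := by
      intro v hv
      rcases hj v hv with h | rfl | h
      · exact Or.inl h
      · rcases Sym2.mem_iff.mp hv with h | h
        exacts [absurd ⟨j, h⟩ hu, absurd ⟨j, h⟩ hw]
      · exact Or.inr h
    have hne := hadj.ne
    have he : s(u, w) = s(x j, z j) := by
      rcases hxz u (Sym2.mem_mk_left _ _) with rfl | rfl <;>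
        rcases hxz w (Sym2.mem_mk_right _ _) with rfl | rfl
      exacts [absurd rfl hne, rfl, Sym2.eq_swap, absurd rfl hne]
    rw [chainGraph_adj, he, swapInTriangles_xz hπ hwit hdisj] at hadj
    rcases hadj.1 with h | h
    exacts [(hwit j).c_ne_a (Option.some.inj h), (hwit j).c_ne_b (Option.some.inj h)]
  · refine deleteEdges_adj.mpr ⟨?_, fun he => h ⟨i, ?_⟩⟩
    · rwa [chainGraph_adj, swapInTriangles_of_not_subset h, ← chainGraph_adj] at hadj
    · rw [Set.mem_singleton_iff.mp he]
      intro v hv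
      rcases Sym2.mem_iff.mp hv with rfl | rfl
      exacts [x_mem_triangle x y z i, z_mem_triangle x y z i]

lemma not_chainReach_swapInTriangles (hab : a ≠ b) (i : ι) :
    ¬ chainReach (swapInTriangles π a x y z c) a b (x i) (y i) := by
  intro h
  have hnot_range : ∀ {v}, v ∈ triangle x y z i → v ≠ y i → v ∉ Set.range y := by
    rintro v hv hne ⟨j, rfl⟩
    obtain rfl := eq_of_mem_triangle hdisj (y_mem_triangle x y z j) hv
    exact hne rfl
  have hyz : (chainGraph (swapInTriangles π a x y z c) a b).Adj (y i) (z i) :=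
    chainGraph_adj.mpr ⟨Or.inl (swapInTriangles_yz hπ hwit hdisj i), (hwit i).y_ne_z hπ⟩
  have hreach : ((chainGraph π a b).deleteEdges {s(x i, z i)}).Reachable (x i) (z i) :=
    (Reachable.trans h hyz.reachable).of_adj_off_leaves
      (by rintro _ ⟨j, rfl⟩
          exact subsingleton_neighborSet_chainGraph_swapInTriangles hπ hwit hdisj hab j)
      (fun _ _ => chainGraph_swapInTriangles_adj_of_notMem_range hπ hwit hdisj i)
      (hnot_range (x_mem_triangle x y z i) (hwit i).x_ne_y)
      (hnot_range (z_mem_triangle x y z i) ((hwit i).y_ne_z hπ).symm)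
  obtain ⟨_, C, hC, hxz⟩ := adj_and_reachable_delete_edges_iff_exists_cycle.mp
    ⟨chainGraph_adj.mpr ⟨Or.inl (hwit i).color_xz, (hwit i).x_ne_z hπ⟩, hreach⟩
  exact (hwit i).not_inChainCycle
    (hπ.inChainCycle_of_isCycle hC (C.fst_mem_support_of_mem_edges hxz))

end Family

end Triangles

theorem stmt10_general {V : Type} [Fintype V] [DecidableEq V] (G : SimpleGraph V) [DecidableRel G.Adj]
    (π : Sym2 V → Option (Fin 8)) (hπ : IsProperPEC G 8 π)
    (a b : Fin 8) (hab : a ≠ b) (S : Set (V × V))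
    (hS : ∀ p ∈ S, G.Adj p.1 p.2 ∧ π s(p.1, p.2) = none ∧
      IsButterflyLikeAt G p.1 p.2 ∧ HasType2 G π p.1 p.2 a b)
    (hind : ∀ p ∈ S, ∀ q ∈ S, p ≠ q → ¬ edgeDistLE G 2 s(p.1, p.2) s(q.1, q.2)) :
    ∃ σ : Sym2 V → Option (Fin 8), IsProperPEC G 8 σ ∧
      (∀ e, σ e ≠ none ↔ π e ≠ none) ∧
      ∀ p ∈ S, HasType1 σ p.1 p.2 a b := by
  choose c z hwit using fun p : S => (hS p p.2).2.2.2.exists_type2Witness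
  let x : S → V := fun p => p.1.1
  let y : S → V := fun p => p.1.2
  have hnear : ∀ p v, v ∈ triangle x y z p → vtxEdgeDistLE G 1 v s(x p, y p) :=
    fun p _ hv => vtxEdgeDistLE_one_of_mem_triangle (hπ.adj (hwit p).color_xz) hv
  have hdisj : Pairwise fun p q => Disjoint (triangle x y z p) (triangle x y z q) :=
    fun p q hpq => Set.disjoint_left.mpr fun v hp hq => hind p p.2 q q.2
      (Subtype.coe_injective.ne hpq) (edgeDistLE_of_vtxEdgeDistLE (hnear p v hp) (hnear q v hq))
  refine ⟨swapInTriangles π a x y z c, isProperPEC_swapInTriangles hπ hwit hdisj,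
    swapInTriangles_ne_none_iff hπ hwit hdisj, fun p hp => ?_⟩
  exact ⟨freeAt_swapInTriangles_x hπ hwit hdisj ⟨p, hp⟩,
    freeAt_swapInTriangles_y hπ hwit hdisj hab ⟨p, hp⟩,
    fun h => not_chainReach_swapInTriangles hπ hwit hdisj hab ⟨p, hp⟩ h.1⟩

/-- A pairwise 2-independent family of uncolored butterfly-like edges of type `2_{ab}` can be
turned, without changing the set of colored edges, into a family of edges of type `1_{ab}`. -/
theorem stmt10 {V : Type} [Fintype V] [DecidableEq V] (G : SimpleGraph V) [DecidableRel G.Adj]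
    (hΔ : G.maxDegree ≤ 8) (π : Sym2 V → Option (Fin 8)) (hπ : IsProperPEC G 8 π)
    (a b : Fin 8) (hab : a ≠ b) (S : Set (V × V))
    (hS : ∀ p ∈ S, G.Adj p.1 p.2 ∧ π s(p.1, p.2) = none ∧
      IsButterflyLikeAt G p.1 p.2 ∧ HasType2 G π p.1 p.2 a b)
    (hind : ∀ p ∈ S, ∀ q ∈ S, p ≠ q → ¬ edgeDistLE G 2 s(p.1, p.2) s(q.1, q.2)) :
    ∃ σ : Sym2 V → Option (Fin 8), IsProperPEC G 8 σ ∧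
      (∀ e, σ e ≠ none ↔ π e ≠ none) ∧
      ∀ p ∈ S, HasType1 σ p.1 p.2 a b :=
  stmt10_general G π hπ a b hab S hS hind
end
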